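/- arXiv:math/0502290 — 2 statements merged into one kernel-verified Lean document; each statement's English description precedes it below -/
import Mathlib

section
/- For every f ∈ L²_loc(ℝᵈ) and u ∈ L²_loc(ℝᵈ) with ‖f‖_Ḃ < ∞ and ‖u‖_{Ḃ*} < ∞, the product fu is integrable and |∫_{ℝᵈ} f(x) u(x) dx| ≤ ‖f‖_Ḃ · ‖u‖_{Ḃ*}. -/
open MeasureTheory Metric Complex Filter
open scoped ENNReal Topology

noncomputable section

abbrev Euc (d : ℕ) := EuclideanSpace ℝ (Fin d)

def Cann (d : ℕ) (j : ℤ) : Set (Euc d) := {x | (2:ℝ)^j ≤ ‖x‖ ∧ ‖x‖ ≤ (2:ℝ)^(j+1)}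

def bTerm {d : ℕ} (f : Euc d → ℂ) (j : ℤ) : ℝ :=
  ((2:ℝ)^(j+1) * ∫ x in Cann d j, ‖f x‖^2) ^ ((1:ℝ)/2)

def bNorm {d : ℕ} (f : Euc d → ℂ) : ℝ := ∑' j : ℤ, bTerm f j

def bStarSq {d : ℕ} (u : Euc d → ℂ) : ℝ :=
  ⨆ R : {R : ℝ // 0 < R}, (1 / (R:ℝ)) * ∫ x in ball (0:Euc d) R, ‖u x‖^2

def pd {d : ℕ} {F : Type} [NormedAddCommGroup F] [NormedSpace ℝ F]
    (u : Euc d → F) (i : Fin d) (x : Euc d) : F :=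
  fderiv ℝ u x (EuclideanSpace.single i 1)

def lap {d : ℕ} {F : Type} [NormedAddCommGroup F] [NormedSpace ℝ F]
    (u : Euc d → F) (x : Euc d) : F :=
  ∑ i, pd (pd u i) i x

def gradSq {d : ℕ} (u : Euc d → ℂ) (x : Euc d) : ℝ := ∑ i, ‖pd u i x‖^2

/-!
On the half-open dyadic shell `2^j ≤ ‖x‖ < 2^(j+1)`, which lies in both `C(j)` and
`B(0, 2^(j+1))`, Cauchy–Schwarz bounds `∫ |f u|` by
`(∫_{C(j)} |f|²)^(1/2) (∫_{B(0,2^(j+1))} |u|²)^(1/2) ≤ bTerm f j · ‖u‖_{Ḃ*}`.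
The shells cover everything but the origin, which carries no mass of `|u|²` because
`∫_{B(0,R)} |u|² ≤ ‖u‖²_{Ḃ*} R → 0` (this matters for `d = 0`, where volume is a Dirac mass).
Summing over `j` in `ℝ≥0∞` gives both the integrability of `f u` and the bound.
-/

open Set

section

variable {E : Type*} [NormedAddCommGroup E]

def dyadicShell (j : ℤ) : Set E := (‖·‖) ⁻¹' Ico ((2 : ℝ) ^ j) (2 ^ (j + 1))

lemma measurableSet_dyadicShell [MeasurableSpace E] [OpensMeasurableSpace E] (j : ℤ) :
    MeasurableSet (dyadicShell (E := E) j) :=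
  measurable_norm measurableSet_Ico

lemma pairwise_disjoint_dyadicShell :
    Pairwise (Function.onFun Disjoint (dyadicShell : ℤ → Set E)) := fun _ _ hij =>
  ((zpow_right_mono₀ (one_le_two (α := ℝ))).pairwise_disjoint_on_Ico_succ hij).preimage _

lemma iUnion_dyadicShell : ⋃ j, dyadicShell (E := E) j = {0}ᶜ := by
  ext x
  simp only [mem_iUnion, mem_compl_singleton_iff, ← norm_pos_iff]
  exact ⟨fun ⟨j, hj⟩ => (zpow_pos two_pos j).trans_le hj.1,
    fun hx => exists_mem_Ico_zpow hx one_lt_two⟩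

lemma dyadicShell_subset_ball (j : ℤ) : dyadicShell (E := E) j ⊆ ball 0 (2 ^ (j + 1)) :=
  fun _ hx => mem_ball_zero_iff.2 hx.2

lemma setLIntegral_singleton_zero_eq_zero_of_ball_le [MeasurableSpace E] {μ : Measure E}
    {g : E → ℝ≥0∞} {M : ℝ}
    (hg : ∀ R > 0, ∫⁻ x in ball 0 R, g x ∂μ ≤ ENNReal.ofReal (M * R)) :
    ∫⁻ x in {0}, g x ∂μ = 0 := by
  have hlim : Tendsto (fun R => ENNReal.ofReal (M * R)) (𝓝[>] 0) (𝓝 0) := by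
    simpa using (ENNReal.tendsto_ofReal ((continuous_const.mul continuous_id).tendsto' 0 0
      (by simp))).mono_left nhdsWithin_le_nhds
  refine nonpos_iff_eq_zero.1 (ge_of_tendsto hlim ?_)
  filter_upwards [self_mem_nhdsWithin] with R hR
  exact (lintegral_mono_set (singleton_subset_iff.2 (mem_ball_self hR))).trans (hg R hR)

end

lemma ofReal_integral_norm_sq {α F : Type*} [MeasurableSpace α] {μ : Measure α}
    [NormedAddCommGroup F] {g : α → F} (hg : Integrable (fun x => ‖g x‖ ^ 2) μ) :
    ENNReal.ofReal (∫ x, ‖g x‖ ^ 2 ∂μ) = ∫⁻ x, ‖g x‖ₑ ^ (2 : ℝ) ∂μ := by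
  rw [ofReal_integral_eq_lintegral_ofReal hg (ae_of_all _ fun _ => sq_nonneg _)]
  congr 1 with x
  rw [ENNReal.ofReal_pow (norm_nonneg _), ofReal_norm, ENNReal.rpow_two]

lemma integrable_and_norm_integral_le_of_lintegral_enorm_le {α F : Type*} [MeasurableSpace α]
    {μ : Measure α} [NormedAddCommGroup F] [NormedSpace ℝ F] {g : α → F}
    (hg : AEStronglyMeasurable g μ) {C : ℝ} (hC : 0 ≤ C)
    (h : ∫⁻ x, ‖g x‖ₑ ∂μ ≤ ENNReal.ofReal C) :
    Integrable g μ ∧ ‖∫ x, g x ∂μ‖ ≤ C := by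
  refine ⟨⟨hg, h.trans_lt ENNReal.ofReal_lt_top⟩, (ENNReal.ofReal_le_ofReal_iff hC).1 ?_⟩
  rw [ofReal_norm]
  exact (enorm_integral_le_lintegral_enorm g).trans h

lemma measurableSet_cann (d : ℕ) (j : ℤ) : MeasurableSet (Cann d j) :=
  measurable_norm measurableSet_Icc

lemma dyadicShell_subset_cann (d : ℕ) (j : ℤ) : dyadicShell j ⊆ Cann d j :=
  fun _ hx => ⟨hx.1, hx.2.le⟩

lemma bTerm_nonneg {d : ℕ} (f : Euc d → ℂ) (j : ℤ) : 0 ≤ bTerm f j :=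
  Real.rpow_nonneg (mul_nonneg (by positivity)
    (setIntegral_nonneg (measurableSet_cann d j) fun _ _ => sq_nonneg _)) _

lemma bNorm_nonneg {d : ℕ} (f : Euc d → ℂ) : 0 ≤ bNorm f :=
  tsum_nonneg (bTerm_nonneg f)

lemma bStarSq_nonneg {d : ℕ} (u : Euc d → ℂ) : 0 ≤ bStarSq u :=
  Real.iSup_nonneg fun R => mul_nonneg (one_div_nonneg.2 R.2.le)
    (setIntegral_nonneg measurableSet_ball fun _ _ => sq_nonneg _)

lemma ofReal_bTerm {d : ℕ} {f : Euc d → ℂ} {j : ℤ}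
    (hf : IntegrableOn (fun x => ‖f x‖ ^ 2) (Cann d j)) :
    ENNReal.ofReal (bTerm f j) =
      (ENNReal.ofReal (2 ^ (j + 1)) * ∫⁻ x in Cann d j, ‖f x‖ₑ ^ (2 : ℝ)) ^ (1 / 2 : ℝ) := by
  rw [bTerm, ← ENNReal.ofReal_rpow_of_nonneg (mul_nonneg (by positivity)
      (setIntegral_nonneg (measurableSet_cann d j) fun _ _ => sq_nonneg _)) (by norm_num),
    ENNReal.ofReal_mul (by positivity), ofReal_integral_norm_sq hf]

lemma setLIntegral_ball_enorm_sq_le {d : ℕ} {u : Euc d → ℂ}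
    (hu : ∀ R > 0, IntegrableOn (fun x => ‖u x‖ ^ 2) (ball (0 : Euc d) R))
    (huB : BddAbove (Set.range fun R : {R : ℝ // 0 < R} =>
      (1 / (R : ℝ)) * ∫ x in ball (0 : Euc d) R, ‖u x‖ ^ 2)) (R : ℝ) (hR : 0 < R) :
    ∫⁻ x in ball 0 R, ‖u x‖ₑ ^ (2 : ℝ) ≤ ENNReal.ofReal (bStarSq u * R) := by
  rw [← ofReal_integral_norm_sq (hu R hR)]
  refine ENNReal.ofReal_le_ofReal ?_
  have := le_ciSup huB ⟨R, hR⟩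
  rwa [one_div_mul_eq_div, div_le_iff₀ hR] at this

section Duality

variable {d : ℕ} {f u : Euc d → ℂ} {M : ℝ}

lemma setLIntegral_dyadicShell_enorm_mul_le (hfm : AEMeasurable (fun x => ‖f x‖ₑ))
    (hum : AEMeasurable (fun x => ‖u x‖ₑ)) (hM : 0 ≤ M)
    (hu : ∀ R > 0, ∫⁻ x in ball 0 R, ‖u x‖ₑ ^ (2 : ℝ) ≤ ENNReal.ofReal (M * R)) {j : ℤ}
    (hf : IntegrableOn (fun x => ‖f x‖ ^ 2) (Cann d j)) :
    ∫⁻ x in dyadicShell j, ‖f x‖ₑ * ‖u x‖ₑ ≤ ENNReal.ofReal (bTerm f j * √M) := by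
  have hf2 : ∫⁻ x in dyadicShell j, ‖f x‖ₑ ^ (2 : ℝ) ≤ ∫⁻ x in Cann d j, ‖f x‖ₑ ^ (2 : ℝ) :=
    lintegral_mono_set (dyadicShell_subset_cann d j)
  have hu2 : ∫⁻ x in dyadicShell j, ‖u x‖ₑ ^ (2 : ℝ) ≤ ENNReal.ofReal (M * 2 ^ (j + 1)) :=
    (lintegral_mono_set (dyadicShell_subset_ball j)).trans (hu _ (by positivity))
  calc ∫⁻ x in dyadicShell j, ‖f x‖ₑ * ‖u x‖ₑ
      ≤ (∫⁻ x in dyadicShell j, ‖f x‖ₑ ^ (2 : ℝ)) ^ (1 / 2 : ℝ) *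
          (∫⁻ x in dyadicShell j, ‖u x‖ₑ ^ (2 : ℝ)) ^ (1 / 2 : ℝ) :=
        ENNReal.lintegral_mul_le_Lp_mul_Lq _ .two_two hfm.restrict hum.restrict
    _ ≤ (∫⁻ x in Cann d j, ‖f x‖ₑ ^ (2 : ℝ)) ^ (1 / 2 : ℝ) *
          ENNReal.ofReal (M * 2 ^ (j + 1)) ^ (1 / 2 : ℝ) := by gcongr
    _ = ENNReal.ofReal (bTerm f j * √M) := by
      rw [ENNReal.ofReal_mul (bTerm_nonneg f j), ofReal_bTerm hf,
        ENNReal.ofReal_mul hM, Real.sqrt_eq_rpow, ← ENNReal.ofReal_rpow_of_nonneg hM (by norm_num),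
        ENNReal.mul_rpow_of_nonneg _ _ (by norm_num), ENNReal.mul_rpow_of_nonneg _ _ (by norm_num)]
      ring

lemma lintegral_enorm_mul_le_bNorm_mul_sqrt (hfm : AEMeasurable (fun x => ‖f x‖ₑ))
    (hum : AEMeasurable (fun x => ‖u x‖ₑ)) (hM : 0 ≤ M)
    (hu : ∀ R > 0, ∫⁻ x in ball 0 R, ‖u x‖ₑ ^ (2 : ℝ) ≤ ENNReal.ofReal (M * R))
    (hf : ∀ j, IntegrableOn (fun x => ‖f x‖ ^ 2) (Cann d j)) (hfB : Summable (bTerm f)) :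
    ∫⁻ x, ‖f x * u x‖ₑ ≤ ENNReal.ofReal (bNorm f * √M) := by
  have horigin : ∫⁻ x in {0}, ‖f x‖ₑ * ‖u x‖ₑ = 0 := by
    refine nonpos_iff_eq_zero.1
      ((ENNReal.lintegral_mul_le_Lp_mul_Lq _ .two_two hfm.restrict hum.restrict).trans ?_)
    rw [setLIntegral_singleton_zero_eq_zero_of_ball_le hu, ENNReal.zero_rpow_of_pos (by norm_num),
      mul_zero]
  simp only [enorm_mul]
  rw [← lintegral_add_compl _ (measurableSet_singleton 0), horigin, zero_add,
    ← iUnion_dyadicShell, lintegral_iUnion measurableSet_dyadicShell pairwise_disjoint_dyadicShell]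
  calc ∑' j, ∫⁻ x in dyadicShell j, ‖f x‖ₑ * ‖u x‖ₑ
      ≤ ∑' j, ENNReal.ofReal (bTerm f j * √M) :=
        ENNReal.tsum_le_tsum fun j => setLIntegral_dyadicShell_enorm_mul_le hfm hum hM hu (hf j)
    _ = ENNReal.ofReal (bNorm f * √M) := by
      rw [← ENNReal.ofReal_tsum_of_nonneg
        (fun j => mul_nonneg (bTerm_nonneg f j) (Real.sqrt_nonneg M)) (hfB.mul_right _),
        tsum_mul_right, bNorm]

end Duality

/-- Duality: |∫ f u| ≤ ‖f‖_Ḃ ‖u‖_{Ḃ*} for f ∈ Ḃ, u ∈ Ḃ*, both L²_loc. -/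
theorem duality_B_Bstar {d : ℕ} (f u : Euc d → ℂ)
    (hfm : AEStronglyMeasurable f volume) (hum : AEStronglyMeasurable u volume)
    (hfloc : ∀ R > 0, IntegrableOn (fun x => ‖f x‖^2) (ball (0:Euc d) R) volume)
    (huloc : ∀ R > 0, IntegrableOn (fun x => ‖u x‖^2) (ball (0:Euc d) R) volume)
    (hfB : Summable (bTerm f))
    (huB : BddAbove (Set.range fun R : {R : ℝ // 0 < R} =>
      (1 / (R:ℝ)) * ∫ x in ball (0:Euc d) R, ‖u x‖^2)) :
    Integrable (fun x => f x * u x) volume ∧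
      ‖∫ x, f x * u x‖ ≤ bNorm f * Real.sqrt (bStarSq u) := by
  have hfCann (j : ℤ) : IntegrableOn (fun x => ‖f x‖ ^ 2) (Cann d j) :=
    (hfloc (2 ^ (j + 1) + 1) (by positivity)).mono_set
      fun _ hx => mem_ball_zero_iff.2 (hx.2.trans_lt (lt_add_one _))
  refine integrable_and_norm_integral_le_of_lintegral_enorm_le (hfm.mul hum)
    (mul_nonneg (bNorm_nonneg f) (Real.sqrt_nonneg _)) ?_
  exact lintegral_enorm_mul_le_bNorm_mul_sqrt hfm.enorm hum.enorm (bStarSq_nonneg u)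
    (setLIntegral_ball_enorm_sq_le huloc huB) hfCann hfB
end
end

section
/- Let u ∈ H²(ℝᵈ) solve iεu + Δu + n u = f with ε > 0, n ∈ W^{1,∞}(ℝᵈ, ℝ), f ∈ L², and assume u, ∇u decay sufficiently at infinity. Then (1/2) ∫_{ℝᵈ} (∂_d n) |u|² dx = − Re ∫_{ℝᵈ} f ∂_d ū dx − ε Im ∫_{ℝᵈ} u ∂_d ū dx. -/
open MeasureTheory Metric Complex Filter
open scoped ENNReal Topology

noncomputable section

/-! Multiply the equation by `∂_d ū` and take real parts. Pointwise,
`Re (∂ᵢ∂ᵢu ∂_d ū) = ∂ᵢ Re (∂ᵢu ∂_d ū) - ½ ∂_d |∂ᵢu|²` by the symmetry of second derivatives, and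
`Re (n u ∂_d ū) = ½ n ∂_d |u|²`. Derivatives of compactly supported `C¹` functions integrate to
zero, so the Laplacian contributes nothing, and one integration by parts turns the potential term
into `-½ ∫ (∂_d n) |u|²`; the absorption term `iεu` gives `-ε Im ∫ u ∂_d ū`. -/

open ComplexConjugate

section PartialDerivatives

variable {k : ℕ} {F : Type} [NormedAddCommGroup F] [NormedSpace ℝ F]

theorem contDiff_pd {m n : WithTop ℕ∞} {u : Euc k → F} (hu : ContDiff ℝ n u) (hmn : m + 1 ≤ n)
    (i : Fin k) : ContDiff ℝ m (pd u i) :=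
  hu.fderiv_right hmn |>.clm_apply contDiff_const

theorem hasCompactSupport_pd {u : Euc k → F} (hu : HasCompactSupport u) (i : Fin k) :
    HasCompactSupport (pd u i) :=
  hu.fderiv_apply (𝕜 := ℝ) _

theorem continuous_pd {g : Euc k → F} (hg : ContDiff ℝ 1 g) (i : Fin k) : Continuous (pd g i) :=
  (contDiff_pd hg (m := 0) (by norm_num) i).continuous

theorem integrable_pd {g : Euc k → F} (hg : ContDiff ℝ 1 g) (hgc : HasCompactSupport g)
    (i : Fin k) : Integrable (pd g i) :=
  (continuous_pd hg i).integrable_of_hasCompactSupport (hasCompactSupport_pd hgc i)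

theorem pd_pd_comm {u : Euc k → F} (hu : ContDiff ℝ 2 u) (i j : Fin k) (x : Euc k) :
    pd (pd u i) j x = pd (pd u j) i x := by
  have hd : DifferentiableAt ℝ (fderiv ℝ u) x :=
    (hu.fderiv_right (m := 1) le_rfl).differentiable one_ne_zero x
  have hsnd : ∀ a b : Fin k, pd (pd u a) b x
      = fderiv ℝ (fderiv ℝ u) x (EuclideanSpace.single b 1) (EuclideanSpace.single a 1) := by
    intro a b
    change fderiv ℝ (fun y => fderiv ℝ u y (EuclideanSpace.single a 1)) x _ = _
    rw [fderiv_clm_apply hd (differentiableAt_const _)]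
    simp
  rw [hsnd, hsnd, (hu.contDiffAt (x := x)).isSymmSndFDerivAt (by simp)]

theorem integral_pd_eq_zero [CompleteSpace F] {g : Euc k → F} (hg : ContDiff ℝ 1 g)
    (hgc : HasCompactSupport g) (i : Fin k) : ∫ x, pd g i x = 0 := by
  have hpd : Integrable (fun x => (1 : ℝ) • pd g i x) := by simpa using integrable_pd hg hgc i
  have hgi : Integrable (fun x => (1 : ℝ) • g x) := by
    simpa using hg.continuous.integrable_of_hasCompactSupport hgc
  simpa [pd] using integral_smul_fderiv_eq_neg_fderiv_smul_of_integrable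
    (f := fun _ : Euc k => (1 : ℝ)) (v := EuclideanSpace.single i 1) (by simp) hpd hgi
    (fun _ _ => differentiableAt_const _) (fun x _ => hg.differentiable one_ne_zero x)

end PartialDerivatives

section ComplexPairing

variable {k : ℕ}

theorem pd_re_mul_conj {φ ψ : Euc k → ℂ} {x : Euc k} (hφ : DifferentiableAt ℝ φ x)
    (hψ : DifferentiableAt ℝ ψ x) (i : Fin k) :
    pd (fun y => (φ y * conj (ψ y)).re) i x
      = (pd φ i x * conj (ψ x)).re + (φ x * conj (pd ψ i x)).re := by
  have hconj : HasFDerivAt (fun y => conj (ψ y))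
      (conjCLE.toContinuousLinearMap.comp (fderiv ℝ ψ x)) x :=
    conjCLE.hasFDerivAt.comp x hψ.hasFDerivAt
  have h := reCLM.hasFDerivAt.comp x (hφ.hasFDerivAt.mul hconj)
  simp only [pd, Function.comp_def, reCLM_apply, Pi.mul_apply] at h ⊢
  rw [h.fderiv]
  simp [add_comm, mul_comm]

theorem ContDiff.re_mul_conj {m : WithTop ℕ∞} {φ ψ : Euc k → ℂ} (hφ : ContDiff ℝ m φ)
    (hψ : ContDiff ℝ m ψ) : ContDiff ℝ m (fun y => (φ y * conj (ψ y)).re) :=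
  reCLM.contDiff.comp (hφ.mul (conjCLE.contDiff.comp hψ))

theorem HasCompactSupport.re_mul_conj {φ : Euc k → ℂ} (hφ : HasCompactSupport φ)
    (ψ : Euc k → ℂ) : HasCompactSupport (fun y => (φ y * conj (ψ y)).re) :=
  hφ.mul_right.comp_left (g := Complex.re) rfl

theorem pd_norm_sq {u : Euc k → ℂ} {x : Euc k} (hu : DifferentiableAt ℝ u x) (i : Fin k) :
    pd (fun y => ‖u y‖ ^ 2) i x = 2 * (u x * conj (pd u i x)).re := by
  simp only [pd, hu.hasFDerivAt.norm_sq.fderiv]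
  simp [Complex.inner, mul_add, mul_comm]

end ComplexPairing

section Multipliers

variable {k : ℕ} {u : Euc k → ℂ}

theorem re_pd_pd_mul_conj_pd (hu : ContDiff ℝ 2 u) (i j : Fin k) (x : Euc k) :
    (pd (pd u i) i x * conj (pd u j x)).re
      = pd (fun y => (pd u i y * conj (pd u j y)).re) i x
        - (1 / 2) * pd (fun y => ‖pd u i y‖ ^ 2) j x := by
  have hd : ∀ l, Differentiable ℝ (pd u l) :=
    fun l => (contDiff_pd hu (m := 1) (by norm_num) l).differentiable one_ne_zero
  rw [pd_re_mul_conj (hd i x) (hd j x), pd_norm_sq (hd i x), pd_pd_comm hu j i x]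
  ring

theorem integral_re_lap_mul_conj_pd (hu : ContDiff ℝ 2 u) (hc : HasCompactSupport u) (j : Fin k) :
    ∫ x, (lap u x * conj (pd u j x)).re = 0 := by
  have hC1 : ∀ l, ContDiff ℝ 1 (pd u l) := fun l => contDiff_pd hu (by norm_num) l
  have hG : ∀ i, ContDiff ℝ 1 (fun y => (pd u i y * conj (pd u j y)).re) :=
    fun i => (hC1 i).re_mul_conj (hC1 j)
  have hGc : ∀ i, HasCompactSupport (fun y => (pd u i y * conj (pd u j y)).re) :=
    fun i => (hasCompactSupport_pd hc i).re_mul_conj _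
  have hN : ∀ i, ContDiff ℝ 1 (fun y => ‖pd u i y‖ ^ 2) := fun i => (hC1 i).norm_sq ℝ
  have hNc : ∀ i, HasCompactSupport (fun y => ‖pd u i y‖ ^ 2) :=
    fun i => (hasCompactSupport_pd hc i).comp_left (g := fun z : ℂ => ‖z‖ ^ 2) (by simp)
  calc ∫ x, (lap u x * conj (pd u j x)).re
      = ∫ x, ∑ i, (pd (fun y => (pd u i y * conj (pd u j y)).re) i x
          - (1 / 2) * pd (fun y => ‖pd u i y‖ ^ 2) j x) := by
        simp only [lap, Finset.sum_mul, Complex.re_sum, re_pd_pd_mul_conj_pd hu]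
    _ = ∑ i, ((∫ x, pd (fun y => (pd u i y * conj (pd u j y)).re) i x)
          - (1 / 2) * ∫ x, pd (fun y => ‖pd u i y‖ ^ 2) j x) := by
        have hint : ∀ i, Integrable (fun x => pd (fun y => (pd u i y * conj (pd u j y)).re) i x
            - (1 / 2) * pd (fun y => ‖pd u i y‖ ^ 2) j x) := fun i =>
          (integrable_pd (hG i) (hGc i) i).sub ((integrable_pd (hN i) (hNc i) j).const_mul _)
        rw [integral_finsetSum _ fun i _ => hint i]
        congr 1 with i
        rw [integral_sub (integrable_pd (hG i) (hGc i) i)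
          ((integrable_pd (hN i) (hNc i) j).const_mul _), integral_const_mul]
    _ = 0 := Finset.sum_eq_zero fun i _ => by
        rw [integral_pd_eq_zero (hG i) (hGc i), integral_pd_eq_zero (hN i) (hNc i), mul_zero,
          sub_zero]

theorem integrable_mul_conj_pd {φ : Euc k → ℂ} (hφ : Continuous φ) (hu : ContDiff ℝ 1 u)
    (hc : HasCompactSupport u) (j : Fin k) : Integrable (fun x => φ x * conj (pd u j x)) :=
  (hφ.mul (continuous_conj.comp (continuous_pd hu j))).integrable_of_hasCompactSupport
    ((hasCompactSupport_pd hc j).comp_left (map_zero _)).mul_left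

theorem integral_re_mul_mul_conj_pd {n : Euc k → ℝ} {M : ℝ} (hn : Differentiable ℝ n)
    (hM : ∀ x, ‖fderiv ℝ n x‖ ≤ M) (hu : ContDiff ℝ 1 u) (hc : HasCompactSupport u) (j : Fin k) :
    ∫ x, ((n x : ℂ) * u x * conj (pd u j x)).re = -(1 / 2) * ∫ x, pd n j x * ‖u x‖ ^ 2 := by
  have hN : ContDiff ℝ 1 (fun y => ‖u y‖ ^ 2) := hu.norm_sq ℝ
  have hNc : HasCompactSupport (fun y => ‖u y‖ ^ 2) :=
    hc.comp_left (g := fun z : ℂ => ‖z‖ ^ 2) (by simp)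
  have hpdn : AEStronglyMeasurable (pd n j) :=
    (measurable_fderiv_apply_const ℝ n _).aestronglyMeasurable
  have hbound : ∀ x, ‖pd n j x‖ ≤ M := fun x => by
    simpa [pd] using (fderiv ℝ n x).le_of_opNorm_le (hM x) (EuclideanSpace.single j 1)
  have ibp := integral_mul_fderiv_eq_neg_fderiv_mul_of_integrable (f := n)
    (g := fun y => ‖u y‖ ^ 2) (v := EuclideanSpace.single j 1)
    ((hN.continuous.integrable_of_hasCompactSupport hNc).bdd_mul hpdn (ae_of_all _ hbound))
    ((hn.continuous.mul (continuous_pd hN j)).integrable_of_hasCompactSupport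
      (hasCompactSupport_pd hNc j).mul_left)
    ((hn.continuous.mul hN.continuous).integrable_of_hasCompactSupport hNc.mul_left)
    (fun x _ => hn x) (fun x _ => hN.differentiable one_ne_zero x)
  calc ∫ x, ((n x : ℂ) * u x * conj (pd u j x)).re
      = (1 / 2) * ∫ x, n x * pd (fun y => ‖u y‖ ^ 2) j x := by
        rw [← integral_const_mul]
        congr 1 with x
        rw [mul_assoc, re_ofReal_mul, pd_norm_sq (hu.differentiable one_ne_zero x)]
        ring
    _ = -(1 / 2) * ∫ x, pd n j x * ‖u x‖ ^ 2 := by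
        simp only [pd] at ibp ⊢
        rw [ibp]
        ring

end Multipliers

theorem helmholtz_dd_identity_general {d : ℕ} (ε : ℝ)
    (n : Euc (d+1) → ℝ) (hn : Differentiable ℝ n)
    (hnW : ∃ M, ∀ x, |n x| ≤ M ∧ ‖fderiv ℝ n x‖ ≤ M)
    (u f : Euc (d+1) → ℂ) (hu : ContDiff ℝ 2 u) (hudecay : HasCompactSupport u)
    (heq : ∀ x, Complex.I * ε * u x + lap u x + n x * u x = f x) :
    (1/2) * ∫ x, pd n (Fin.last d) x * ‖u x‖^2
      = -(∫ x, f x * (starRingEnd ℂ) (pd u (Fin.last d) x)).re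
        - ε * (∫ x, u x * (starRingEnd ℂ) (pd u (Fin.last d) x)).im := by
  obtain ⟨M, hM⟩ := hnW
  set e := Fin.last d
  have hu1 : ContDiff ℝ 1 u := hu.of_le one_le_two
  have hiu := integrable_mul_conj_pd hu.continuous hu1 hudecay e
  have hilap := integrable_mul_conj_pd (φ := lap u) (continuous_finsetSum _ fun i _ =>
    continuous_pd (contDiff_pd hu (m := 1) (by norm_num) i) i) hu1 hudecay e
  have hinu := integrable_mul_conj_pd (φ := fun x => n x * u x)
    ((continuous_ofReal.comp hn.continuous).mul hu.continuous) hu1 hudecay e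
  have hsplit : ∫ x, f x * conj (pd u e x) = Complex.I * ε * (∫ x, u x * conj (pd u e x))
      + (∫ x, lap u x * conj (pd u e x)) + ∫ x, n x * u x * conj (pd u e x) := by
    simp_rw [← heq, add_mul, mul_assoc (Complex.I * ε)]
    rw [integral_add _ hinu, integral_add _ hilap, integral_const_mul]
    exacts [hiu.const_mul _, (hiu.const_mul _).add hilap]
  have hre : ∀ g : Euc (d+1) → ℂ, Integrable g → (∫ x, g x).re = ∫ x, (g x).re :=
    fun g hg => (integral_re hg).symm
  rw [hsplit, add_re, add_re, hre _ hilap, hre _ hinu, integral_re_lap_mul_conj_pd hu hudecay e,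
    integral_re_mul_mul_conj_pd hn (fun x => (hM x).2) hu1 hudecay e]
  simp [Complex.mul_re]

/-- The ∂_d-multiplier identity (eg4), case without interface. -/
theorem helmholtz_dd_identity {d : ℕ} (ε : ℝ) (hε : 0 < ε)
    (n : Euc (d+1) → ℝ) (hn : Differentiable ℝ n)
    (hnW : ∃ M, ∀ x, |n x| ≤ M ∧ ‖fderiv ℝ n x‖ ≤ M)
    (u f : Euc (d+1) → ℂ) (hu : ContDiff ℝ 2 u) (hudecay : HasCompactSupport u)
    (hf : MemLp f 2 (volume : Measure (Euc (d+1))))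
    (heq : ∀ x, Complex.I * ε * u x + lap u x + n x * u x = f x) :
    (1/2) * ∫ x, pd n (Fin.last d) x * ‖u x‖^2
      = -(∫ x, f x * (starRingEnd ℂ) (pd u (Fin.last d) x)).re
        - ε * (∫ x, u x * (starRingEnd ℂ) (pd u (Fin.last d) x)).im :=
  helmholtz_dd_identity_general ε n hn hnW u f hu hudecay heq
end
end
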